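/- On a compact cscK manifold, the kernel of the Lichnerowicz operator P*P on real functions of zero mean equals 𝔨, the space of normalized Hamiltonian functions of Killing vector fields that are holomorphic; equivalently, φ ∈ ker P*P iff the Hamiltonian vector field X_φ is real holomorphic. -/
import Mathlib


open scoped RealInnerProductSpace

/-- On a compact cscK manifold, the kernel of the Lichnerowicz
operator `P*P` on (zero-mean) real functions equals `𝔨`, the space of normalized
Hamiltonians of holomorphic Killing vector fields; equivalently `φ ∈ ker P*P` iff
the Hamiltonian vector field `X_φ` is holomorphic (`∂̄X_φ = 0`). Here `H` is the
space of normalized Hamiltonian functions with the `L²` inner product, `VF` the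
space of vector fields, `X` the map `φ ↦ X_φ`, `dbar` the `∂̄`-operator on vector
fields, `P = ∂̄ ∘ X` and `Pstar` its formal adjoint. -/
theorem stmt_18
    {H V VF : Type*}
    [NormedAddCommGroup H] [InnerProductSpace ℝ H]
    [NormedAddCommGroup V] [InnerProductSpace ℝ V]
    [AddCommGroup VF] [Module ℝ VF]
    -- φ ↦ X_φ, the Hamiltonian vector field construction
    (X : H →ₗ[ℝ] VF)
    -- the ∂̄-operator on vector fields
    (dbar : VF →ₗ[ℝ] V)
    -- P(φ) = ∂̄ X_φ and its formal adjoint P*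
    (P : H →ₗ[ℝ] V) (hP : P = dbar ∘ₗ X)
    (Pstar : V →ₗ[ℝ] H)
    (hadj : ∀ (v : V) (φ : H), ⟪Pstar v, φ⟫ = ⟪v, P φ⟫)
    -- 𝔨: Hamiltonians of Killing fields that are holomorphic, i.e. ker P
    (𝔨 : Submodule ℝ H) (h𝔨 : 𝔨 = LinearMap.ker P) :
    LinearMap.ker (Pstar ∘ₗ P) = 𝔨 ∧
    (∀ φ : H, (Pstar ∘ₗ P) φ = 0 ↔ dbar (X φ) = 0) := by
  have key : ∀ φ : H, (Pstar ∘ₗ P) φ = 0 ↔ P φ = 0 := by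
    intro φ
    constructor
    · intro h
      have h1 : ⟪Pstar (P φ), φ⟫ = 0 := by
        have : Pstar (P φ) = 0 := h
        simp [this]
      rw [hadj] at h1
      exact inner_self_eq_zero.mp h1
    · intro h
      simp only [LinearMap.comp_apply, h, map_zero]
  constructor
  · ext φ
    simp only [LinearMap.mem_ker, h𝔨, key]
  · intro φ
    rw [key, hP]
    rfl
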